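/- Let M be a complete Kähler manifold of complex dimension m with nonnegative holomorphic bisectional curvature. For any integer k ≥ 1, the dimension bound dim_ℂ(O_d(M)) ≤ C_1(m) d^m implies that any m + 1 holomorphic functions of polynomial growth on M are algebraically dependent over ℂ; equivalently, the transcendence degree of M(M) over ℂ is at most m. -/

import Mathlib

/-!
Poincaré–Siegel argument. Let `f₀, …, f_m ∈ 𝒪_P(M)` have growth degrees `dᵢ` and put
`D = 1 + ∑ dᵢ`. The monomials `∏ fᵢ ^ σᵢ` with all exponents `σᵢ < t` lie in `𝒪_{tD}(M)`, and if
the `fᵢ` were algebraically independent they would be `t ^ (m + 1)` linearly independent elements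
of it. The dimension bound caps this number by `C₁ (tD) ^ m`, which is smaller once `t > C₁ D ^ m`.
-/

open scoped Manifold
open Metric

/-- The space `𝒪_d(M)` of holomorphic functions of polynomial growth of degree `d`
on a complex manifold `M` carrying a distance function, with base point `o`. -/
def polyGrowthHolFns (m : ℕ) (M : Type) [MetricSpace M]
    [ChartedSpace (EuclideanSpace ℂ (Fin m)) M] (o : M) (d : ℝ) : Set (M → ℂ) :=
  {f | MDifferentiable 𝓘(ℂ, EuclideanSpace ℂ (Fin m)) 𝓘(ℂ, ℂ) f ∧
    ∃ C : ℝ, ∀ x : M, ‖f x‖ ≤ C * (1 + dist x o) ^ d}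

/-- The ring `𝒪_P(M) = ⋃_{d ≥ 0} 𝒪_d(M)` of holomorphic functions of polynomial
growth. -/
def polyGrowthHolRing (m : ℕ) (M : Type) [MetricSpace M]
    [ChartedSpace (EuclideanSpace ℂ (Fin m)) M] (o : M) : Set (M → ℂ) :=
  {f | ∃ d : ℝ, 0 ≤ d ∧ f ∈ polyGrowthHolFns m M o d}

/-- A family of `ℂ`-valued functions is algebraically independent over `ℂ` if no
nonzero polynomial relation with complex coefficients holds identically. -/
def AlgIndepFns {M : Type} {k : ℕ} (f : Fin k → M → ℂ) : Prop :=
  ∀ p : MvPolynomial (Fin k) ℂ,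
    (∀ x : M, MvPolynomial.eval (fun i => f i x) p = 0) → p = 0

section PolyGrowth

variable {m : ℕ} {M : Type} [MetricSpace M] [ChartedSpace (EuclideanSpace ℂ (Fin m)) M] {o : M}

lemma one_le_one_add_dist (x : M) : 1 ≤ 1 + dist x o :=
  le_add_of_nonneg_right dist_nonneg

lemma polyGrowthHolFns_mono {a b : ℝ} (hab : a ≤ b) :
    polyGrowthHolFns m M o a ⊆ polyGrowthHolFns m M o b := by
  rintro f ⟨hf, C, hC⟩
  -- the bound at the base point forces `0 ≤ C`
  have hC0 : 0 ≤ C := by simpa using (norm_nonneg _).trans (hC o)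
  refine ⟨hf, C, fun x => (hC x).trans ?_⟩
  gcongr
  exact one_le_one_add_dist x

lemma one_mem_polyGrowthHolFns : (1 : M → ℂ) ∈ polyGrowthHolFns m M o 0 :=
  ⟨mdifferentiable_const, 1, fun x => by simp⟩

lemma mul_mem_polyGrowthHolFns {f g : M → ℂ} {a b : ℝ} (hf : f ∈ polyGrowthHolFns m M o a)
    (hg : g ∈ polyGrowthHolFns m M o b) : f * g ∈ polyGrowthHolFns m M o (a + b) := by
  obtain ⟨hf, C, hC⟩ := hf
  obtain ⟨hg, C', hC'⟩ := hg
  refine ⟨hf.mul hg, C * C', fun x => ?_⟩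
  have hr : 0 < 1 + dist x o := zero_lt_one.trans_le (one_le_one_add_dist x)
  calc ‖(f * g) x‖ = ‖f x‖ * ‖g x‖ := norm_mul _ _
    _ ≤ (C * (1 + dist x o) ^ a) * (C' * (1 + dist x o) ^ b) :=
        mul_le_mul (hC x) (hC' x) (norm_nonneg _) ((norm_nonneg _).trans (hC x))
    _ = C * C' * (1 + dist x o) ^ (a + b) := by rw [Real.rpow_add hr]; ring

lemma pow_mem_polyGrowthHolFns {f : M → ℂ} {a : ℝ} (hf : f ∈ polyGrowthHolFns m M o a) (n : ℕ) :
    f ^ n ∈ polyGrowthHolFns m M o (n * a) := by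
  induction n with
  | zero => simpa using one_mem_polyGrowthHolFns
  | succ n ih => simpa [pow_succ, add_mul] using mul_mem_polyGrowthHolFns ih hf

lemma prod_mem_polyGrowthHolFns {ι : Type*} (s : Finset ι) {f : ι → M → ℂ} {a : ι → ℝ}
    (hf : ∀ i ∈ s, f i ∈ polyGrowthHolFns m M o (a i)) :
    ∏ i ∈ s, f i ∈ polyGrowthHolFns m M o (∑ i ∈ s, a i) := by
  classical
  induction s using Finset.induction with
  | empty => simpa using one_mem_polyGrowthHolFns
  | insert i s hi ih =>
    rw [Finset.prod_insert hi, Finset.sum_insert hi]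
    exact mul_mem_polyGrowthHolFns (hf i (s.mem_insert_self i))
      (ih fun j hj => hf j (Finset.mem_insert_of_mem hj))

end PolyGrowth

lemma MvPolynomial.aeval_pi_apply {R σ X : Type*} [CommSemiring R] (f : σ → X → R)
    (p : MvPolynomial σ R) (x : X) :
    aeval f p x = eval (fun i => f i x) p :=
  (comp_aeval_apply f (Pi.evalAlgHom R (fun _ => R) x) p).trans (by rw [aeval_eq_eval]; rfl)

lemma algIndepFns_iff_algebraicIndependent {M : Type} {k : ℕ} (f : Fin k → M → ℂ) :
    AlgIndepFns f ↔ AlgebraicIndependent ℂ f := by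
  simp only [AlgIndepFns, algebraicIndependent_iff, funext_iff, MvPolynomial.aeval_pi_apply,
    Pi.zero_apply]

lemma AlgebraicIndependent.linearIndependent_prod_pow_fin {R A : Type*} [CommRing R]
    [CommRing A] [Algebra R A] {k : ℕ} {f : Fin k → A} (hf : AlgebraicIndependent R f) (t : ℕ) :
    LinearIndependent R (fun σ : Fin k → Fin t => ∏ i, f i ^ (σ i : ℕ)) := by
  have hexp : Function.Injective
      fun σ : Fin k → Fin t => Finsupp.equivFunOnFinite.symm fun i => (σ i : ℕ) :=
    fun σ τ h => funext fun i => Fin.ext (DFunLike.congr_fun h i)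
  have hmono : (fun σ : Fin k → Fin t => ∏ i, f i ^ (σ i : ℕ)) =
      MvPolynomial.aeval f ∘ MvPolynomial.basisMonomials (Fin k) R ∘
        fun σ => Finsupp.equivFunOnFinite.symm fun i => (σ i : ℕ) := by
    funext σ
    simp [MvPolynomial.aeval_monomial, Finsupp.prod_fintype]
  rw [hmono]
  exact ((MvPolynomial.basisMonomials (Fin k) R).linearIndependent.map'
    (MvPolynomial.aeval f).toLinearMap (LinearMap.ker_eq_bot.2 hf)).comp _ hexp

lemma AlgIndepFns.pow_le_finrank_span_polyGrowthHolFns {m : ℕ} {M : Type} [MetricSpace M]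
    [ChartedSpace (EuclideanSpace ℂ (Fin m)) M] {o : M} {k : ℕ} {f : Fin k → M → ℂ}
    {d : Fin k → ℝ} (hind : AlgIndepFns f) (hd0 : ∀ i, 0 ≤ d i)
    (hf : ∀ i, f i ∈ polyGrowthHolFns m M o (d i)) (t : ℕ) {e : ℝ} (he : t * ∑ i, d i ≤ e)
    [FiniteDimensional ℂ (Submodule.span ℂ (polyGrowthHolFns m M o e))] :
    t ^ k ≤ Module.finrank ℂ (Submodule.span ℂ (polyGrowthHolFns m M o e)) := by
  set monomial : (Fin k → Fin t) → M → ℂ := fun σ => ∏ i, f i ^ (σ i : ℕ)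
  have hli : LinearIndependent ℂ monomial :=
    ((algIndepFns_iff_algebraicIndependent f).1 hind).linearIndependent_prod_pow_fin t
  have hmem : ∀ σ, monomial σ ∈ polyGrowthHolFns m M o e := by
    intro σ
    have hdeg : ∑ i, (σ i : ℕ) * d i ≤ e := by
      refine le_trans ?_ ((Finset.mul_sum _ _ _).symm.trans_le he)
      gcongr with i
      exacts [hd0 i, (σ i).isLt.le]
    exact polyGrowthHolFns_mono hdeg
      (prod_mem_polyGrowthHolFns _ fun i _ => pow_mem_polyGrowthHolFns (hf i) _)
  calc t ^ k = Fintype.card (Fin k → Fin t) := by simp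
    _ = Module.finrank ℂ (Submodule.span ℂ (Set.range monomial)) := (finrank_span_eq_card hli).symm
    _ ≤ _ := Submodule.finrank_mono (Submodule.span_mono (Set.range_subset_iff.2 hmem))

lemma exists_nat_mul_pow_lt_pow_succ (C D : ℝ) (m : ℕ) :
    ∃ t : ℕ, 0 < t ∧ C * (t * D) ^ m < (t : ℝ) ^ (m + 1) := by
  obtain ⟨t, ht⟩ := exists_nat_gt (max (C * D ^ m) 0)
  have ht0 : (0 : ℝ) < t := (le_max_right _ _).trans_lt ht
  refine ⟨t, by exact_mod_cast ht0, ?_⟩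
  calc C * (t * D) ^ m = C * D ^ m * (t : ℝ) ^ m := by ring
    _ < t * (t : ℝ) ^ m := mul_lt_mul_of_pos_right ((le_max_left _ _).trans_lt ht) (by positivity)
    _ = (t : ℝ) ^ (m + 1) := by ring

theorem algebraic_dependence_of_dim_bound_general
    (m : ℕ)
    (M : Type) [MetricSpace M]
    [ChartedSpace (EuclideanSpace ℂ (Fin m)) M]
    (o : M)
    -- the dimension bound `dim_ℂ 𝒪_d(M) ≤ C₁ d^m`:
    (C₁ : ℝ)
    (hdim : ∀ d : ℝ, 1 ≤ d →
      FiniteDimensional ℂ ↥(Submodule.span ℂ (polyGrowthHolFns m M o d)) ∧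
      (Module.finrank ℂ ↥(Submodule.span ℂ (polyGrowthHolFns m M o d)) : ℝ) ≤
        C₁ * d ^ m) :
    -- any `m + 1` functions in `𝒪_P(M)` are algebraically dependent:
    ∀ f : Fin (m + 1) → M → ℂ,
      (∀ i, f i ∈ polyGrowthHolRing m M o) → ¬ AlgIndepFns f := by
  intro f hf hind
  choose d hd0 hd using hf
  set D := 1 + ∑ i, d i
  have hD : ∑ i, d i ≤ D := le_add_of_nonneg_left zero_le_one
  obtain ⟨t, ht0, hlt⟩ := exists_nat_mul_pow_lt_pow_succ C₁ D m
  have htD : 1 ≤ (t : ℝ) * D :=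
    one_le_mul_of_one_le_of_one_le (by exact_mod_cast ht0)
      (le_add_of_nonneg_right (Finset.sum_nonneg fun i _ => hd0 i))
  obtain ⟨hfin, hrank⟩ := hdim _ htD
  have hcard : ((t ^ (m + 1) : ℕ) : ℝ) ≤ _ := Nat.cast_le.2 <|
    hind.pow_le_finrank_span_polyGrowthHolFns hd0 hd t (mul_le_mul_of_nonneg_left hD t.cast_nonneg)
  push_cast at hcard
  linarith

/-- **Transcendence degree bound from the dimension bound.**  On a complete
Kähler manifold `M^m` of nonnegative holomorphic bisectional curvature, the
estimate `dim_ℂ 𝒪_d(M) ≤ C₁ d^m` implies that any `m + 1` holomorphic functions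
of polynomial growth are algebraically dependent over `ℂ`, i.e.
`deg_tr ℳ(M) ≤ m`. -/
theorem algebraic_dependence_of_dim_bound
    (m : ℕ) (hm : 1 ≤ m)
    (M : Type) [MetricSpace M] [CompleteSpace M] [ConnectedSpace M]
    [ChartedSpace (EuclideanSpace ℂ (Fin m)) M]
    [IsManifold 𝓘(ℂ, EuclideanSpace ℂ (Fin m)) (⊤ : WithTop ℕ∞) M]
    -- placeholders for the geometric hypotheses not yet formalizable in Mathlib:
    (MetricIsKahler : Prop) (hKahler : MetricIsKahler)
    (NonnegBisectionalCurvature : Prop) (hCurv : NonnegBisectionalCurvature)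
    (o : M)
    -- the dimension bound `dim_ℂ 𝒪_d(M) ≤ C₁ d^m`:
    (C₁ : ℝ) (hC₁ : 0 < C₁)
    (hdim : ∀ d : ℝ, 1 ≤ d →
      FiniteDimensional ℂ ↥(Submodule.span ℂ (polyGrowthHolFns m M o d)) ∧
      (Module.finrank ℂ ↥(Submodule.span ℂ (polyGrowthHolFns m M o d)) : ℝ) ≤
        C₁ * d ^ m) :
    -- any `m + 1` functions in `𝒪_P(M)` are algebraically dependent:
    ∀ f : Fin (m + 1) → M → ℂ,
      (∀ i, f i ∈ polyGrowthHolRing m M o) → ¬ AlgIndepFns f :=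
  algebraic_dependence_of_dim_bound_general m M o C₁ hdim
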